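/- In the two-colour free flood-filling game on a connected graph G, the minimum number of moves required to make G monochromatic equals the radius of G, i.e. min over vertices v of max over vertices u of d(u,v). Consequently 2-FREE-FLOOD-IT is solvable in polynomial time. -/

import Mathlib

namespace Flood

variable {V C : Type*}

/-- Two vertices are joined by an edge inside a monochromatic class. -/
def monoAdj (G : SimpleGraph V) (ω : V → C) (a b : V) : Prop :=
  G.Adj a b ∧ ω a = ω b

/-- `u` and `v` lie in a common monochromatic component of the colouring `ω`. -/
def monoLinked (G : SimpleGraph V) (ω : V → C) (u v : V) : Prop :=
  Relation.ReflTransGen (monoAdj G ω) u v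

/-- One flooding move: recolour the monochromatic component of `v` with colour `d`. -/
noncomputable def floodMove (G : SimpleGraph V) (ω : V → C) (v : V) (d : C) : V → C :=
  fun u => @ite _ (monoLinked G ω v u) (Classical.propDecidable _) d (ω u)

/-- Apply a sequence of flooding moves. -/
noncomputable def floodSeq (G : SimpleGraph V) (ω : V → C) (S : List (V × C)) : V → C :=
  S.foldl (fun ω' m => floodMove G ω' m.1 m.2) ω

/-- The sequence `S` floods `G`, i.e. makes it monochromatic. -/
def Floods (G : SimpleGraph V) (ω : V → C) (S : List (V × C)) : Prop :=
  ∀ a b, floodSeq G ω S a = floodSeq G ω S b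

/-- Minimum number of moves needed to make `G` monochromatic. -/
noncomputable def floodCost (G : SimpleGraph V) (ω : V → C) : ℕ :=
  sInf {k | ∃ S, S.length = k ∧ Floods G ω S}

/-- Minimum number of moves needed to make `G` monochromatic in colour `d`. -/
noncomputable def floodCostIn (G : SimpleGraph V) (ω : V → C) (d : C) : ℕ :=
  sInf {k | ∃ S, S.length = k ∧ ∀ a, floodSeq G ω S a = d}

/-- The sequence `S` links `u` and `v`. -/
def Links (G : SimpleGraph V) (ω : V → C) (S : List (V × C)) (u v : V) : Prop :=
  monoLinked G (floodSeq G ω S) u v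

/-- Minimum number of moves needed to link `u` and `v`. -/
noncomputable def linkCost (G : SimpleGraph V) (ω : V → C) (u v : V) : ℕ :=
  sInf {k | ∃ S, S.length = k ∧ Links G ω S u v}

/-- Minimum number of moves needed to link `u` and `v` in a monochromatic
component of colour `d`. -/
noncomputable def linkCostIn (G : SimpleGraph V) (ω : V → C) (u v : V) (d : C) : ℕ :=
  sInf {k | ∃ S, S.length = k ∧ Links G ω S u v ∧ floodSeq G ω S u = d}


/-- In the two-colour game a move at a vertex flips the colour of its
monochromatic component (thereby merging it with all neighbouring components). -/
noncomputable def flipSeq (G : SimpleGraph V) (ω : V → Bool) (S : List V) : V → Bool :=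
  S.foldl (fun ω' x => floodMove G ω' x (!ω' x)) ω

end Flood

open Flood

/-!
`changeDist ω u v`, the least number of colour changes along a walk from `u` to `v`, is the
distance between the monochromatic components of `u` and `v` in the graph obtained by contracting
each of them; for a proper colouring it is the graph distance. A move at `x` merges the component
`X` of `x` with neighbouring components. If after the move `v` is within `r` of every vertex and
`s ≤ r` is its new distance to `x`, pick `z` on a cheapest old walk from `x` to `v`, within `s` of
`x` and `1` of `v`. A cheapest new walk from `u ∉ X` to `v` either is no cheaper than before, and
then `u` is within `r + 1` of `z` via `v`, or enters `X`, and then `u` is within `r + 1 - s` of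
`x`, hence within `r + 1` of `z` via `x`. So if `k` moves flood the graph, some vertex is within
`k` of every other. Conversely, flipping the component of `v` `k` times turns it into the ball of
radius `k` about `v`.
-/

namespace Flood

open SimpleGraph

variable {V C : Type*} {G : SimpleGraph V}

section ColourChanges

variable [DecidableEq C] (ω : V → C)

def colourChanges {u v : V} (p : G.Walk u v) : ℕ :=
  p.darts.countP fun d => ω d.fst ≠ ω d.snd

variable {ω}

@[simp] lemma colourChanges_nil {u : V} : colourChanges ω (Walk.nil : G.Walk u u) = 0 := rfl

lemma colourChanges_cons {u v w : V} (h : G.Adj u v) (p : G.Walk v w) :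
    colourChanges ω (.cons h p) = (if ω u = ω v then 0 else 1) + colourChanges ω p := by
  by_cases huv : ω u = ω v <;> simp [colourChanges, huv, add_comm]

lemma colourChanges_append {u v w : V} (p : G.Walk u v) (q : G.Walk v w) :
    colourChanges ω (p.append q) = colourChanges ω p + colourChanges ω q := by
  simp [colourChanges, Walk.darts_append]

lemma colourChanges_reverse {u v : V} (p : G.Walk u v) :
    colourChanges ω p.reverse = colourChanges ω p := by
  simp [colourChanges, Walk.darts_reverse, List.countP_map, Function.comp_def, eq_comm]

lemma colourChanges_eq_zero_of_forall_eq (hω : ∀ a b, ω a = ω b) {u v : V} (p : G.Walk u v) :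
    colourChanges ω p = 0 := by
  simp [colourChanges, fun d : G.Dart => hω d.fst d.snd]

lemma colourChanges_eq_length (hω : ∀ a b, G.Adj a b → ω a ≠ ω b) {u v : V}
    (p : G.Walk u v) : colourChanges ω p = p.length := by
  rw [colourChanges, List.countP_eq_length.mpr fun d _ => decide_eq_true (hω _ _ d.adj),
    Walk.length_darts]

end ColourChanges

lemma reachable_of_monoLinked {ω : V → C} {u v : V} (h : monoLinked G ω u v) :
    G.Reachable u v :=
  (reachable_iff_reflTransGen u v).mpr (Relation.ReflTransGen.mono (fun _ _ hab => hab.1) _ _ h)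

section ChangeDist

variable [DecidableEq C] {ω : V → C} {u v w : V}

variable (G ω) in
noncomputable def changeDist (u v : V) : ℕ :=
  ⨅ p : G.Walk u v, colourChanges ω p

lemma changeDist_le (p : G.Walk u v) : changeDist G ω u v ≤ colourChanges ω p :=
  ciInf_le (OrderBot.bddBelow _) p

lemma exists_colourChanges_eq_changeDist (h : G.Reachable u v) :
    ∃ p : G.Walk u v, colourChanges ω p = changeDist G ω u v :=
  have : Nonempty (G.Walk u v) := h
  ciInf_mem _

lemma changeDist_of_not_reachable (h : ¬ G.Reachable u v) : changeDist G ω u v = 0 :=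
  have := not_nonempty_iff.mp h
  Nat.iInf_of_empty _

@[simp] lemma changeDist_self : changeDist G ω u u = 0 :=
  Nat.eq_zero_of_le_zero (changeDist_le .nil)

lemma changeDist_comm : changeDist G ω u v = changeDist G ω v u := by
  rw [changeDist, changeDist, iInf, iInf, ← Walk.reverse_surjective.range_comp]
  simp only [Function.comp_def, colourChanges_reverse]

lemma changeDist_triangle (h : G.Reachable u v) :
    changeDist G ω u w ≤ changeDist G ω u v + changeDist G ω v w := by
  by_cases hvw : G.Reachable v w
  · obtain ⟨p, hp⟩ := exists_colourChanges_eq_changeDist (ω := ω) h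
    obtain ⟨q, hq⟩ := exists_colourChanges_eq_changeDist (ω := ω) hvw
    rw [← hp, ← hq, ← colourChanges_append]
    exact changeDist_le _
  · rw [changeDist_of_not_reachable fun huw => hvw (h.symm.trans huw)]
    exact Nat.zero_le _

lemma changeDist_le_of_adj (h : G.Adj u v) :
    changeDist G ω u v ≤ if ω u = ω v then 0 else 1 := by
  simpa [colourChanges_cons] using changeDist_le (ω := ω) (.cons h .nil)

lemma changeDist_le_one_of_adj (h : G.Adj u v) : changeDist G ω u v ≤ 1 :=
  (changeDist_le_of_adj h).trans (by split <;> omega)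

lemma changeDist_eq_zero_of_monoLinked (h : monoLinked G ω u v) : changeDist G ω u v = 0 := by
  induction h with
  | refl => exact changeDist_self
  | @tail b c hub hbc ih =>
    have hbc' := changeDist_le_of_adj (ω := ω) hbc.1
    rw [if_pos hbc.2] at hbc'
    have := changeDist_triangle (w := c) (ω := ω) (reachable_of_monoLinked hub)
    omega

lemma dist_le_changeDist (hG : G.Preconnected) (hω : ∀ a b, G.Adj a b → ω a ≠ ω b) :
    G.dist u v ≤ changeDist G ω u v := by
  obtain ⟨p, hp⟩ := exists_colourChanges_eq_changeDist (ω := ω) (hG u v)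
  rw [← hp, colourChanges_eq_length hω]
  exact dist_le p

end ChangeDist

section FloodMove

variable {ω : V → C} {x u v : V} {d : C}

lemma floodMove_of_monoLinked (h : monoLinked G ω x u) : floodMove G ω x d u = d :=
  if_pos h

lemma floodMove_of_not_monoLinked (h : ¬ monoLinked G ω x u) : floodMove G ω x d u = ω u :=
  if_neg h

lemma monoLinked_floodMove (h : monoLinked G ω u v) : monoLinked G (floodMove G ω x d) u v := by
  refine Relation.ReflTransGen.mono (fun a b hab => ⟨hab.1, ?_⟩) _ _ h
  by_cases ha : monoLinked G ω x a
  · rw [floodMove_of_monoLinked ha, floodMove_of_monoLinked (ha.tail hab)]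
  · have hb : ¬ monoLinked G ω x b := fun hb => ha (hb.tail ⟨hab.1.symm, hab.2.symm⟩)
    rw [floodMove_of_not_monoLinked ha, floodMove_of_not_monoLinked hb, hab.2]

variable [DecidableEq C]

/-- Either the move does not make the walk cheaper, or the walk enters the component of `x` and
can be rerouted through `x` at the cost of one colour change. -/
lemma changeDist_le_or_floodMove {w : V} (p : G.Walk u w) (hu : ¬ monoLinked G ω x u) :
    changeDist G ω u w ≤ colourChanges (floodMove G ω x d) p ∨
      changeDist G ω u x + changeDist G (floodMove G ω x d) x w ≤
        colourChanges (floodMove G ω x d) p + 1 := by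
  induction p with
  | nil => left; simp
  | @cons u y w h q ih =>
    by_cases hy : monoLinked G ω x y
    · right
      have hux : changeDist G ω u x ≤ 1 := by
        have hyx : changeDist G ω y x = 0 := by
          rw [changeDist_comm, changeDist_eq_zero_of_monoLinked hy]
        have := changeDist_triangle (w := x) (ω := ω) h.reachable
        have := changeDist_le_one_of_adj (ω := ω) h
        omega
      have hxw :
          changeDist G (floodMove G ω x d) x w ≤ colourChanges (floodMove G ω x d) q := by
        calc changeDist G (floodMove G ω x d) x w
            ≤ changeDist G (floodMove G ω x d) x y + changeDist G (floodMove G ω x d) y w :=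
              changeDist_triangle (reachable_of_monoLinked hy)
          _ ≤ colourChanges (floodMove G ω x d) q := by
              rw [changeDist_eq_zero_of_monoLinked (monoLinked_floodMove hy), zero_add]
              exact changeDist_le q
      rw [colourChanges_cons]
      omega
    · have hstep : changeDist G ω u y + colourChanges (floodMove G ω x d) q ≤
          colourChanges (floodMove G ω x d) (.cons h q) := by
        rw [colourChanges_cons, floodMove_of_not_monoLinked hu, floodMove_of_not_monoLinked hy]
        have := changeDist_le_of_adj (ω := ω) h
        omega
      rcases ih hy with hyw | hyx
      · have := changeDist_triangle (w := w) (ω := ω) h.reachable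
        omega
      · have := changeDist_triangle (w := x) (ω := ω) h.reachable
        omega

end FloodMove

section Radius

variable [DecidableEq C] {ω : V → C}

lemma exists_changeDist_le_of_colourChanges_le_add {u w : V} (p : G.Walk u w) {s t : ℕ}
    (hp : colourChanges ω p ≤ s + t) :
    ∃ z, changeDist G ω u z ≤ s ∧ changeDist G ω z w ≤ t := by
  induction p generalizing s with
  | @nil a => exact ⟨a, by simp, by simp⟩
  | @cons u y w h q ih =>
    rcases Nat.eq_zero_or_pos s with rfl | hs
    · exact ⟨u, by simp, (changeDist_le (.cons h q)).trans (by omega)⟩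
    · have hedge := changeDist_le_of_adj (ω := ω) h
      have hone := changeDist_le_one_of_adj (ω := ω) h
      rw [colourChanges_cons] at hp
      obtain ⟨z, hyz, hzw⟩ := ih (s := s - changeDist G ω u y) (by omega)
      exact ⟨z, (changeDist_triangle h.reachable).trans (by omega), hzw⟩

theorem exists_changeDist_le_succ_of_floodMove (hG : G.Preconnected) {x v : V} {d : C} {r : ℕ}
    (hv : ∀ u, changeDist G (floodMove G ω x d) u v ≤ r) :
    ∃ z, ∀ u, changeDist G ω u z ≤ r + 1 := by
  set s := changeDist G (floodMove G ω x d) x v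
  have hsr : s ≤ r := hv x
  have hxv : changeDist G ω x v ≤ s + 1 := by
    by_cases hv : monoLinked G ω x v
    · rw [changeDist_eq_zero_of_monoLinked hv]
      omega
    · obtain ⟨p, hp⟩ := exists_colourChanges_eq_changeDist (ω := floodMove G ω x d) (hG v x)
      rw [changeDist_comm] at hp ⊢
      have := changeDist_self (G := G) (ω := floodMove G ω x d) (u := x)
      rcases changeDist_le_or_floodMove (d := d) p hv with h | h <;> omega
  obtain ⟨P, hP⟩ := exists_colourChanges_eq_changeDist (ω := ω) (hG x v)
  obtain ⟨z, hxz, hzv⟩ :=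
    exists_changeDist_le_of_colourChanges_le_add P (s := s) (t := 1) (hP ▸ hxv)
  refine ⟨z, fun u => ?_⟩
  have hux := changeDist_triangle (w := z) (ω := ω) (hG u x)
  by_cases hu : monoLinked G ω x u
  · rw [changeDist_comm (v := x), changeDist_eq_zero_of_monoLinked hu] at hux
    omega
  · obtain ⟨p, hp⟩ := exists_colourChanges_eq_changeDist (ω := floodMove G ω x d) (hG u v)
    have hpr := hv u
    have huv := changeDist_triangle (w := z) (ω := ω) (hG u v)
    rw [changeDist_comm (u := v)] at huv
    rcases changeDist_le_or_floodMove (d := d) p hu with h | h <;> omega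

end Radius

theorem exists_changeDist_le_length_of_flipSeq (hG : G.Connected) (S : List V) (ω : V → Bool)
    (hS : ∀ a b, flipSeq G ω S a = flipSeq G ω S b) :
    ∃ z, ∀ u, changeDist G ω u z ≤ S.length := by
  induction S generalizing ω with
  | nil =>
    obtain ⟨z⟩ := hG.nonempty
    refine ⟨z, fun u => ?_⟩
    obtain ⟨p⟩ := hG.preconnected u z
    exact (changeDist_le p).trans (colourChanges_eq_zero_of_forall_eq hS p).le
  | cons y S ih =>
    obtain ⟨v, hv⟩ := ih _ hS
    exact exists_changeDist_le_succ_of_floodMove hG.preconnected hv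

section Ball

variable {ω : V → Bool}

lemma eq_iterate_not_length (hω : ∀ a b, G.Adj a b → ω a ≠ ω b) {u w : V}
    (p : G.Walk u w) :
    ω u = not^[p.length] (ω w) := by
  induction p with
  | nil => rfl
  | cons h p ih =>
    rw [Walk.length_cons, Function.iterate_succ_apply', ← ih]
    exact Bool.eq_not.mpr (hω _ _ h)

lemma eq_iterate_not_dist (hω : ∀ a b, G.Adj a b → ω a ≠ ω b) {u v : V}
    (h : G.Reachable u v) :
    ω u = not^[G.dist u v] (ω v) := by
  obtain ⟨p, hp⟩ := h.exists_walk_length_eq_dist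
  rw [← hp]
  exact eq_iterate_not_length hω p

variable (G) in
noncomputable def ballFlip (ω : V → Bool) (v : V) (k : ℕ) : V → Bool :=
  fun u => if G.dist u v ≤ k then not^[k] (ω v) else ω u

variable {v : V} {k : ℕ}

lemma ballFlip_of_dist_le {u : V} (h : G.dist u v ≤ k) : ballFlip G ω v k u = not^[k] (ω v) :=
  if_pos h

lemma ballFlip_of_lt_dist {u : V} (h : k < G.dist u v) : ballFlip G ω v k u = ω u :=
  if_neg (Nat.not_le.mpr h)

lemma monoLinked_ballFlip_of_walk {u : V} (p : G.Walk u v) (hp : p.length ≤ k) :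
    monoLinked G (ballFlip G ω v k) v u := by
  induction p with
  | nil => exact .refl
  | @cons a b c h p ih =>
    rw [Walk.length_cons] at hp
    refine (ih (by omega)).tail ⟨h.symm, ?_⟩
    rw [ballFlip_of_dist_le ((dist_le p).trans (by omega)),
      ballFlip_of_dist_le ((dist_le (.cons h p)).trans (by rw [Walk.length_cons]; omega))]

lemma monoLinked_ballFlip_iff (hG : G.Preconnected) (hω : ∀ a b, G.Adj a b → ω a ≠ ω b)
    {u : V} : monoLinked G (ballFlip G ω v k) v u ↔ G.dist u v ≤ k := by
  refine ⟨fun h => ?_, fun h => ?_⟩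
  · induction h with
    | refl => simp
    | @tail b c hb hbc ih =>
      by_contra! hc
      have hcb : G.dist c v ≤ 1 + G.dist b v := by
        simpa [dist_comm, dist_eq_one_iff_adj.mpr hbc.1] using
          hbc.1.symm.reachable.dist_triangle_left v
      have hcv : G.dist c v = k + 1 := by omega
      have hcol := hbc.2
      rw [ballFlip_of_dist_le ih, ballFlip_of_lt_dist hc, eq_iterate_not_dist hω (hG c v), hcv,
        Function.iterate_succ_apply'] at hcol
      exact Bool.not_ne_self _ hcol.symm
  · obtain ⟨p, hp⟩ := (hG u v).exists_walk_length_eq_dist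
    exact monoLinked_ballFlip_of_walk p (hp ▸ h)

lemma floodMove_ballFlip (hG : G.Preconnected) (hω : ∀ a b, G.Adj a b → ω a ≠ ω b) :
    floodMove G (ballFlip G ω v k) v (!ballFlip G ω v k v) = ballFlip G ω v (k + 1) := by
  funext u
  rw [ballFlip_of_dist_le (by simp)]
  by_cases hu : G.dist u v ≤ k
  · rw [floodMove_of_monoLinked ((monoLinked_ballFlip_iff hG hω).mpr hu),
      ballFlip_of_dist_le (by omega), Function.iterate_succ_apply']
  · rw [floodMove_of_not_monoLinked (mt (monoLinked_ballFlip_iff hG hω).mp hu),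
      ballFlip_of_lt_dist (by omega)]
    rcases Nat.lt_or_ge (k + 1) (G.dist u v) with hk | hk
    · rw [ballFlip_of_lt_dist hk]
    · have hk' : G.dist u v = k + 1 := by omega
      rw [ballFlip_of_dist_le hk, eq_iterate_not_dist hω (hG u v), hk']

lemma flipSeq_replicate (hG : G.Preconnected) (hω : ∀ a b, G.Adj a b → ω a ≠ ω b)
    (k : ℕ) :
    flipSeq G ω (List.replicate k v) = ballFlip G ω v k := by
  induction k with
  | zero =>
    funext u
    by_cases hu : u = v
    · subst hu
      simp [flipSeq, ballFlip]
    · exact (ballFlip_of_lt_dist (pos_iff_ne_zero.mpr ((hG u v).dist_eq_zero_iff.not.mpr hu))).symm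
  | succ k ih =>
    rw [List.replicate_succ', flipSeq, List.foldl_append]
    exact (congrArg (fun ω' => floodMove G ω' v (!ω' v)) ih).trans (floodMove_ballFlip hG hω)

end Ball

end Flood

theorem two_colour_flood_eq_radius_general {V : Type*}
    (G : SimpleGraph V) (hG : G.Connected) (ω : V → Bool)
    (hprop : ∀ a b, G.Adj a b → ω a ≠ ω b) :
    sInf {k | ∃ S : List V, S.length = k ∧
        ∀ a b, flipSeq G ω S a = flipSeq G ω S b}
      = sInf {r | ∃ v : V, ∀ u : V, G.dist u v ≤ r} := by
  congr 1
  ext k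
  constructor
  · rintro ⟨S, rfl, hS⟩
    obtain ⟨z, hz⟩ := exists_changeDist_le_length_of_flipSeq hG S ω hS
    exact ⟨z, fun u => (dist_le_changeDist hG.preconnected hprop).trans (hz u)⟩
  · rintro ⟨v, hv⟩
    refine ⟨List.replicate k v, List.length_replicate, fun a b => ?_⟩
    rw [flipSeq_replicate hG.preconnected hprop, ballFlip_of_dist_le (hv a),
      ballFlip_of_dist_le (hv b)]

/-- the minimum number of moves needed to make a connected,
properly two-coloured graph monochromatic equals the radius of the graph,
i.e. the minimum over vertices `v` of the eccentricity `max_u d(u,v)`. -/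
theorem two_colour_flood_eq_radius {V : Type*} [Fintype V]
    (G : SimpleGraph V) (hG : G.Connected) (ω : V → Bool)
    (hprop : ∀ a b, G.Adj a b → ω a ≠ ω b) :
    sInf {k | ∃ S : List V, S.length = k ∧
        ∀ a b, flipSeq G ω S a = flipSeq G ω S b}
      = sInf {r | ∃ v : V, ∀ u : V, G.dist u v ≤ r} :=
  two_colour_flood_eq_radius_general G hG ω hprop
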